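/- Let x, y, z be three distinct vertices and let L_{(u,v)} denote the Laplacian of a single edge of weight 1 between u and v. For every 0 < ε ≤ 1 and every 0 < a ≤ 1, one has ε·a·L_{(x,z)} + ½·L_{(x,y)} ≈_{4√ε} ε·a·L_{(y,z)} + ½·L_{(x,y)}. -/

import Mathlib

open Matrix BigOperators Finset
open scoped Classical

noncomputable section

/-- Loewner order: `PSDLE A B` means `A ⪯ B`, i.e. `B - A` is positive semidefinite. -/
def PSDLE {n : Type*} [Fintype n] (A B : Matrix n n ℝ) : Prop :=
  (B - A).PosSemidef

/-- `ApproxEps A ε B` means `A ≈_ε B`, i.e. `e^ε • B ⪰ A ⪰ e^{-ε} • B`. -/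
def ApproxEps {n : Type*} [Fintype n] (A : Matrix n n ℝ) (ε : ℝ) (B : Matrix n n ℝ) : Prop :=
  PSDLE A (Real.exp ε • B) ∧ PSDLE (Real.exp (-ε) • B) A

/-- `M` is α-strongly diagonally dominant:
`M_{ii} ≥ (1+α)·Σ_{j≠i} |M_{ij}|` for every `i`. -/
def IsStronglyDD {n : Type*} [Fintype n] [DecidableEq n] (α : ℝ) (M : Matrix n n ℝ) : Prop :=
  ∀ i, (1 + α) * ∑ j ∈ Finset.univ.erase i, |M i j| ≤ M i i

/-- A Laplacian matrix: symmetric, nonpositive off-diagonal entries, zero row sums. -/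
def IsLaplacian {n : Type*} [Fintype n] (L : Matrix n n ℝ) : Prop :=
  L.IsSymm ∧ (∀ i j, i ≠ j → L i j ≤ 0) ∧ ∀ i, ∑ j, L i j = 0

/-- An SDDM matrix: symmetric positive definite, nonpositive off-diagonal entries,
and each diagonal entry at least the sum of absolute values of the off-diagonal
entries in its row. -/
def IsSDDM {n : Type*} [Fintype n] [DecidableEq n] (M : Matrix n n ℝ) : Prop :=
  M.IsSymm ∧ M.PosDef ∧ (∀ i j, i ≠ j → M i j ≤ 0) ∧
    ∀ i, ∑ j ∈ Finset.univ.erase i, |M i j| ≤ M i i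

/-- The vector `e_u - e_v`. -/
def eVec {ι : Type*} [DecidableEq ι] (u v : ι) : ι → ℝ :=
  fun a => (if a = u then 1 else 0) - (if a = v then 1 else 0)

/-- The Laplacian of a single unit-weight edge `{u,v}`:
`(e_u - e_v)(e_u - e_v)ᵀ`. -/
def edgeL {ι : Type*} [DecidableEq ι] (u v : ι) : Matrix ι ι ℝ :=
  Matrix.vecMulVec (eVec u v) (eVec u v)

/-!
Write `P = v x - v z` and `Q = v y - v z`, so that `v x - v y = P - Q`. On a vector `v` the two
sides of the approximation are the quadratic forms `ε a P² + (P - Q)²/2` and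
`ε a Q² + (P - Q)²/2`. Replacing `P²` by `Q²` costs `ε a (2 Q (P - Q) + (P - Q)²)`, and AM-GM
with weights `√ε` splits the cross term between `ε a Q²` and `(P - Q)²`; the loss is a factor
`1 + 4√ε ≤ exp (4√ε)`. The statement is symmetric under swapping `x` and `y`, which gives the
other direction.
-/

section Laplacian

variable {ι : Type*} [DecidableEq ι]

lemma eVec_swap (u v : ι) : eVec v u = -eVec u v := by
  ext a
  simp only [eVec, Pi.neg_apply]
  ring

lemma edgeL_comm (u v : ι) : edgeL u v = edgeL v u := by
  rw [edgeL, edgeL, eVec_swap, neg_vecMulVec, vecMulVec_neg, neg_neg]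

variable [Fintype ι]

lemma dotProduct_eVec (u v : ι) (w : ι → ℝ) : eVec u v ⬝ᵥ w = w u - w v := by
  simp [eVec, dotProduct, sub_mul, Finset.sum_sub_distrib, ite_mul]

lemma edgeL_posSemidef (u v : ι) : (edgeL u v).PosSemidef :=
  posSemidef_vecMulVec_self_star (eVec u v)

lemma dotProduct_edgeL_mulVec (u v : ι) (w : ι → ℝ) :
    w ⬝ᵥ (edgeL u v *ᵥ w) = (w u - w v) ^ 2 := by
  rw [edgeL, vecMulVec_mulVec, dotProduct_smul, dotProduct_comm w, dotProduct_eVec, op_smul_eq_mul]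
  ring

end Laplacian

section Loewner

variable {n : Type*} [Fintype n]

lemma psdle_of_dotProduct_mulVec_le {A B : Matrix n n ℝ} (hA : A.IsHermitian)
    (hB : B.IsHermitian) (h : ∀ v, v ⬝ᵥ (A *ᵥ v) ≤ v ⬝ᵥ (B *ᵥ v)) : PSDLE A B := by
  refine PosSemidef.of_dotProduct_mulVec_nonneg (hB.sub hA) fun v => ?_
  rw [sub_mulVec, dotProduct_sub, star_trivial, sub_nonneg]
  exact h v

lemma psdle_exp_smul_of_le_one_add_mul {A B : Matrix n n ℝ} {δ : ℝ} (hA : A.IsHermitian)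
    (hB : B.PosSemidef) (h : ∀ v, v ⬝ᵥ (A *ᵥ v) ≤ (1 + δ) * v ⬝ᵥ (B *ᵥ v)) :
    PSDLE A (Real.exp δ • B) := by
  refine psdle_of_dotProduct_mulVec_le hA (hB.smul (Real.exp_pos δ).le).isHermitian fun v => ?_
  have hBv : 0 ≤ v ⬝ᵥ (B *ᵥ v) := by simpa using hB.dotProduct_mulVec_nonneg v
  calc v ⬝ᵥ (A *ᵥ v) ≤ (1 + δ) * v ⬝ᵥ (B *ᵥ v) := h v
    _ ≤ Real.exp δ * v ⬝ᵥ (B *ᵥ v) := by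
      gcongr
      linarith [Real.add_one_le_exp δ]
    _ = v ⬝ᵥ ((Real.exp δ • B) *ᵥ v) := by rw [smul_mulVec, dotProduct_smul, smul_eq_mul]

lemma PSDLE.exp_neg_smul_left {A B : Matrix n n ℝ} {δ : ℝ} (h : PSDLE B (Real.exp δ • A)) :
    PSDLE (Real.exp (-δ) • B) A := by
  have hA : A - Real.exp (-δ) • B = Real.exp (-δ) • (Real.exp δ • A - B) := by
    rw [smul_sub, smul_smul, ← Real.exp_add, neg_add_cancel, Real.exp_zero, one_smul]
  rw [PSDLE, hA]
  exact h.smul (Real.exp_pos _).le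

lemma approxEps_of_le_one_add_mul {A B : Matrix n n ℝ} {δ : ℝ} (hA : A.PosSemidef)
    (hB : B.PosSemidef) (hAB : ∀ v, v ⬝ᵥ (A *ᵥ v) ≤ (1 + δ) * v ⬝ᵥ (B *ᵥ v))
    (hBA : ∀ v, v ⬝ᵥ (B *ᵥ v) ≤ (1 + δ) * v ⬝ᵥ (A *ᵥ v)) : ApproxEps A δ B :=
  ⟨psdle_exp_smul_of_le_one_add_mul hA.isHermitian hB hAB,
    (psdle_exp_smul_of_le_one_add_mul hB.isHermitian hA hBA).exp_neg_smul_left⟩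

end Loewner

lemma sq_mul_add_half_sq_le {s a P Q : ℝ} (hs0 : 0 ≤ s) (hs1 : s ≤ 1) (ha0 : 0 ≤ a)
    (ha1 : a ≤ 1) :
    s ^ 2 * a * P ^ 2 + 1 / 2 * (P - Q) ^ 2 ≤
      (1 + 4 * s) * (s ^ 2 * a * Q ^ 2 + 1 / 2 * (P - Q) ^ 2) := by
  have amgm : 2 * s ^ 2 * a * Q * (P - Q) ≤ s ^ 3 * a * Q ^ 2 + s * a * (P - Q) ^ 2 := by
    nlinarith [mul_nonneg (mul_nonneg hs0 ha0) (sq_nonneg (s * Q - (P - Q)))]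
  have hsa : s * a * (s + 1) ≤ 2 * s := by nlinarith [mul_nonneg hs0 ha0]
  nlinarith [mul_nonneg (mul_nonneg (pow_nonneg hs0 3) ha0) (sq_nonneg Q),
    mul_le_mul_of_nonneg_right hsa (sq_nonneg (P - Q))]

lemma dotProduct_moved_edge_le {ι : Type*} [Fintype ι] [DecidableEq ι] (x y z : ι) {ε a : ℝ}
    (hε0 : 0 ≤ ε) (hε1 : ε ≤ 1) (ha0 : 0 ≤ a) (ha1 : a ≤ 1) (v : ι → ℝ) :
    v ⬝ᵥ (((ε * a) • edgeL x z + (1 / 2 : ℝ) • edgeL x y) *ᵥ v) ≤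
      (1 + 4 * Real.sqrt ε) *
        v ⬝ᵥ (((ε * a) • edgeL y z + (1 / 2 : ℝ) • edgeL x y) *ᵥ v) := by
  simp only [add_mulVec, smul_mulVec, dotProduct_add, dotProduct_smul, dotProduct_edgeL_mulVec,
    smul_eq_mul]
  have key := sq_mul_add_half_sq_le (P := v x - v z) (Q := v y - v z) (Real.sqrt_nonneg ε)
    (Real.sqrt_le_one.mpr hε1) ha0 ha1
  rwa [Real.sq_sqrt hε0, sub_sub_sub_cancel_right] at key

theorem edge_moving_lemma_general {ι : Type*} [Fintype ι] [DecidableEq ι] (x y z : ι)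
    (ε a : ℝ) (hε0 : 0 < ε) (hε1 : ε ≤ 1) (ha0 : 0 < a) (ha1 : a ≤ 1) :
    ApproxEps ((ε * a) • edgeL x z + (1 / 2 : ℝ) • edgeL x y)
      (4 * Real.sqrt ε)
      ((ε * a) • edgeL y z + (1 / 2 : ℝ) • edgeL x y) := by
  have hεa : 0 ≤ ε * a := by positivity
  have hpsd (u : ι) : ((ε * a) • edgeL u z + (1 / 2 : ℝ) • edgeL x y).PosSemidef :=
    ((edgeL_posSemidef u z).smul hεa).add ((edgeL_posSemidef x y).smul (by norm_num))
  refine approxEps_of_le_one_add_mul (hpsd x) (hpsd y)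
    (dotProduct_moved_edge_le x y z hε0.le hε1 ha0.le ha1) fun v => ?_
  rw [edgeL_comm x y]
  exact dotProduct_moved_edge_le y x z hε0.le hε1 ha0.le ha1 v

/-- for distinct vertices `x, y, z`, `0 < ε ≤ 1` and `0 < a ≤ 1`,
`ε·a·L_(x,z) + ½·L_(x,y) ≈_{4√ε} ε·a·L_(y,z) + ½·L_(x,y)`. -/
theorem edge_moving_lemma {ι : Type*} [Fintype ι] [DecidableEq ι] (x y z : ι)
    (hxy : x ≠ y) (hxz : x ≠ z) (hyz : y ≠ z)
    (ε a : ℝ) (hε0 : 0 < ε) (hε1 : ε ≤ 1) (ha0 : 0 < a) (ha1 : a ≤ 1) :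
    ApproxEps ((ε * a) • edgeL x z + (1 / 2 : ℝ) • edgeL x y)
      (4 * Real.sqrt ε)
      ((ε * a) • edgeL y z + (1 / 2 : ℝ) • edgeL x y) :=
  edge_moving_lemma_general x y z ε a hε0 hε1 ha0 ha1
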